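/- With D = (1/2)·diag(-j,1,-j,-1)·(H₂ ⊗ H₂), the five matrices D, D², D³, D⁴, D⁵ = I₄ are pairwise mutually unbiased bases of C⁴: for any 1 ≤ p < q ≤ 5, every entry of (D^p)* D^q has absolute value 1/2. -/

import Mathlib

/-!
`D` is unitary, so `(D^p)ᴴ D^q = D^(q-p)` and it suffices that `D, D², D³, D⁴` have all entries of
modulus `1/2`. For `D²` one finds `(D²)ᵢⱼ = dᵢ w(i + j)` with `|w| = 1/2`, the addition being in
`(ℤ/2)²`. Finally `D³ = (D²)ᴴ`, hence `D⁴ = (D²)ᴴ D = Dᴴ`, and flatness passes to conjugate transposes.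
-/

open Matrix Kronecker

def sylvesterH2 : Matrix (Fin 2) (Fin 2) ℂ := !![1, 1; 1, -1]

noncomputable def kerdockDiag4 : (Fin 2 × Fin 2) → ℂ :=
  fun p => !![-Complex.I, 1; -Complex.I, -1] p.1 p.2

noncomputable def kerdockD4 : Matrix (Fin 2 × Fin 2) (Fin 2 × Fin 2) ℂ :=
  (1 / 2 : ℂ) • (Matrix.diagonal kerdockDiag4 * (sylvesterH2 ⊗ₖ sylvesterH2))

namespace Matrix

def IsFlat {m n α : Type*} [Norm α] (c : ℝ) (M : Matrix m n α) : Prop :=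
  ∀ i j, ‖M i j‖ = c

theorem IsFlat.conjTranspose {m n α : Type*} [SeminormedAddCommGroup α] [StarAddMonoid α]
    [NormedStarGroup α] {c : ℝ} {M : Matrix m n α} (hM : IsFlat c M) : IsFlat c Mᴴ :=
  fun i j => by rw [conjTranspose_apply, norm_star, hM]

end Matrix

theorem Unitary.star_pow_mul_pow {R : Type*} [Monoid R] [StarMul R] {U : R} (hU : U ∈ unitary R)
    {p q : ℕ} (hpq : p ≤ q) : star (U ^ p) * U ^ q = U ^ (q - p) := by
  rw [← Nat.add_sub_of_le hpq, pow_add, ← mul_assoc,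
    Unitary.star_mul_self_of_mem (pow_mem hU p), one_mul, Nat.add_sub_cancel_left]

theorem sylvesterH2_conjTranspose_mul_self : sylvesterH2ᴴ * sylvesterH2 = (2 : ℂ) • 1 := by
  ext i j
  fin_cases i <;> fin_cases j <;> simp [sylvesterH2, mul_apply, Fin.sum_univ_two] <;> norm_num

theorem norm_sylvesterH2_apply (a b : Fin 2) : ‖sylvesterH2 a b‖ = 1 := by
  fin_cases a <;> fin_cases b <;> simp [sylvesterH2]

theorem star_kerdockDiag4_mul_self (k : Fin 2 × Fin 2) :
    star (kerdockDiag4 k) * kerdockDiag4 k = 1 := by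
  obtain ⟨a, b⟩ := k
  fin_cases a <;> fin_cases b <;> simp [kerdockDiag4]

theorem norm_kerdockDiag4 (k : Fin 2 × Fin 2) : ‖kerdockDiag4 k‖ = 1 := by
  obtain ⟨a, b⟩ := k
  fin_cases a <;> fin_cases b <;> simp [kerdockDiag4]

theorem kerdockD4_mem_unitaryGroup : kerdockD4 ∈ unitaryGroup (Fin 2 × Fin 2) ℂ := by
  have hdiag : (diagonal kerdockDiag4)ᴴ * diagonal kerdockDiag4 = 1 := by
    rw [diagonal_conjTranspose, diagonal_mul_diagonal, ← diagonal_one]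
    exact congrArg diagonal (funext star_kerdockDiag4_mul_self)
  have hkron :
      (sylvesterH2 ⊗ₖ sylvesterH2)ᴴ * (sylvesterH2 ⊗ₖ sylvesterH2) = (4 : ℂ) • 1 := by
    rw [conjTranspose_kronecker, ← mul_kronecker_mul, sylvesterH2_conjTranspose_mul_self,
      smul_kronecker, kronecker_smul, one_kronecker_one, smul_smul]
    norm_num
  rw [mem_unitaryGroup_iff', star_eq_conjTranspose, kerdockD4, conjTranspose_smul,
    conjTranspose_mul, smul_mul_smul_comm, Matrix.mul_assoc, ← Matrix.mul_assoc (diagonal _)ᴴ,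
    hdiag, Matrix.one_mul, hkron, smul_smul]
  norm_num

theorem kerdockD4_apply (i j : Fin 2 × Fin 2) :
    kerdockD4 i j = 1 / 2 * kerdockDiag4 i * (sylvesterH2 i.1 j.1 * sylvesterH2 i.2 j.2) := by
  simp [kerdockD4, diagonal_mul, mul_assoc]

/-- A quarter of the Walsh–Hadamard transform of `kerdockDiag4`. -/
noncomputable def kerdockWalsh4 : (Fin 2 × Fin 2) → ℂ :=
  fun s => !![-Complex.I, -Complex.I; 1, -1] s.1 s.2 / 2

theorem norm_kerdockWalsh4 (s : Fin 2 × Fin 2) : ‖kerdockWalsh4 s‖ = 1 / 2 := by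
  obtain ⟨a, b⟩ := s
  fin_cases a <;> fin_cases b <;> simp [kerdockWalsh4]

theorem kerdockD4_sq_apply (i j : Fin 2 × Fin 2) :
    (kerdockD4 ^ 2) i j = kerdockDiag4 i * kerdockWalsh4 (i + j) := by
  obtain ⟨a, b⟩ := i
  obtain ⟨c, d⟩ := j
  rw [sq, mul_apply]
  fin_cases a <;> fin_cases b <;> fin_cases c <;> fin_cases d <;>
    simp [kerdockD4_apply, kerdockDiag4, kerdockWalsh4, sylvesterH2, Fintype.sum_prod_type,
      Fin.sum_univ_two] <;> ring_nf

theorem kerdockD4_pow_three : kerdockD4 ^ 3 = (kerdockD4 ^ 2)ᴴ := by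
  ext ⟨a, b⟩ ⟨c, d⟩
  rw [pow_succ, mul_apply, conjTranspose_apply, kerdockD4_sq_apply]
  fin_cases a <;> fin_cases b <;> fin_cases c <;> fin_cases d <;>
    simp [kerdockD4_sq_apply, kerdockD4_apply, kerdockDiag4, kerdockWalsh4, sylvesterH2,
      Fintype.sum_prod_type, Fin.sum_univ_two] <;>
    ring_nf <;> simp only [Complex.I_sq, Complex.I_pow_three] <;> ring

theorem kerdockD4_pow_four : kerdockD4 ^ 4 = kerdockD4ᴴ := by
  rw [pow_succ, kerdockD4_pow_three, sq, conjTranspose_mul, Matrix.mul_assoc,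
    ← star_eq_conjTranspose, Unitary.star_mul_self_of_mem kerdockD4_mem_unitaryGroup,
    Matrix.mul_one]

theorem isFlat_kerdockD4 : IsFlat (1 / 2) kerdockD4 := fun i j => by
  rw [kerdockD4_apply, norm_mul, norm_mul, norm_mul, norm_kerdockDiag4, norm_sylvesterH2_apply,
    norm_sylvesterH2_apply]
  norm_num

theorem isFlat_kerdockD4_sq : IsFlat (1 / 2) (kerdockD4 ^ 2) := fun i j => by
  rw [kerdockD4_sq_apply, norm_mul, norm_kerdockDiag4, norm_kerdockWalsh4, one_mul]

theorem isFlat_kerdockD4_pow {r : ℕ} (hr : 1 ≤ r) (hr' : r ≤ 4) :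
    IsFlat (1 / 2) (kerdockD4 ^ r) := by
  interval_cases r
  · simpa using isFlat_kerdockD4
  · exact isFlat_kerdockD4_sq
  · simpa [kerdockD4_pow_three] using isFlat_kerdockD4_sq.conjTranspose
  · simpa [kerdockD4_pow_four] using isFlat_kerdockD4.conjTranspose

/-- The five powers D, D², D³, D⁴, D⁵ = I₄ are pairwise mutually unbiased:
for 1 ≤ p < q ≤ 5, every entry of (D^p)* D^q has absolute value 1/2. -/
theorem kerdock_four_antenna_mub :
    ∀ p q : ℕ, 1 ≤ p → p < q → q ≤ 5 → ∀ i j : Fin 2 × Fin 2,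
      ‖((kerdockD4 ^ p)ᴴ * kerdockD4 ^ q) i j‖ = 1 / 2 := by
  intro p q hp hpq hq i j
  rw [← star_eq_conjTranspose, Unitary.star_pow_mul_pow kerdockD4_mem_unitaryGroup hpq.le]
  exact isFlat_kerdockD4_pow (by omega) (by omega) i j
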